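/- Let G be a finite graph with orientation ε, and A, B finite abelian groups of orders p, q. Then R(G;−p,−q) = (−1)^{r(G)} ∑ (−1)^{|supp g|}, summed over all complementary tension-flows (f,g) ∈ T(G,ε;A) × F(G,ε;B) with supp g = ker f. -/

import Mathlib

/-!
Fix an edge set `X`. Tensions vanishing on `X` are the coboundaries of potentials constant on
the components of `(V, X)`, and the kernel of the coboundary consists of the potentials constant
on the components of `G`; so there are `p ^ (r(G) - r⟨X⟩)` of them. Flows supported on `X` are
the kernel of the boundary map on functions supported on `X`, whose image is the group of
vertex functions summing to zero on every component of `(V, X)`; so there are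
`q ^ (|X| - r⟨X⟩)` of them. Hence the Whitney term of `X` is `(-1) ^ (r(G) + |X|)` times the
number of tension-flows `(f, g)` with `supp g ⊆ X ⊆ ker f`. Summing over `X` first, the
alternating sum over the interval `[supp g, ker f]` vanishes unless `supp g = ker f`.
-/

/-- `f : E → A` is a tension of the digraph `tl, hd : E → V`: it is the
coboundary of a potential `p : V → A`. -/
def IsTension {V E A : Type} [AddCommGroup A] (tl hd : E → V) (f : E → A) : Prop :=
  ∃ p : V → A, ∀ e, f e = p (tl e) - p (hd e)

/-- `g : E → B` is a flow of the digraph `tl, hd : E → V`: conservation holds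
at every vertex. -/
def IsFlow {V E B : Type} [Fintype E] [DecidableEq V] [AddCommGroup B]
    (tl hd : E → V) (g : E → B) : Prop :=
  ∀ v : V, ∑ e ∈ Finset.univ.filter (fun e => tl e = v), g e
         = ∑ e ∈ Finset.univ.filter (fun e => hd e = v), g e

/-- The rank `r⟨X⟩ = |V| - c⟨X⟩` of the spanning subgraph `(V, X)`, where
`c⟨X⟩` is its number of connected components. -/
noncomputable def grank {V E : Type} [Fintype V] (tl hd : E → V) (X : Finset E) : ℕ :=
  Fintype.card V -
    Nat.card (Quot (fun a b : V =>
      ∃ e ∈ X, (tl e = a ∧ hd e = b) ∨ (tl e = b ∧ hd e = a)))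

open Finset

theorem AddSubgroup.card_inf_ker_mul_card_map {G H : Type*} [AddGroup G] [AddGroup H]
    (φ : G →+ H) (S : AddSubgroup G) :
    Nat.card ↥(S ⊓ φ.ker) * Nat.card ↥(S.map φ) = Nat.card S := by
  rw [← φ.domRestrict_range S, ← AddSubgroup.index_ker,
    ← (φ.domRestrict S).ker.card_mul_index, AddMonoidHom.ker_domRestrict,
    ← AddSubgroup.inf_addSubgroupOf_left,
    Nat.card_congr (AddSubgroup.addSubgroupOfEquivOfLe (inf_le_left : S ⊓ φ.ker ≤ S)).toEquiv]

theorem Finset.sum_Icc_neg_one_pow_card {α : Type*} [DecidableEq α] (s t : Finset α) :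
    ∑ u ∈ Icc s t, (-1 : ℤ) ^ #u = if s = t then (-1) ^ #s else 0 := by
  by_cases hst : s ⊆ t
  · have hdisj : ∀ u ∈ (t \ s).powerset, Disjoint s u := fun u hu =>
      disjoint_sdiff.mono_right (mem_powerset.mp hu)
    rw [Icc_eq_image_powerset hst, sum_image, sum_congr rfl fun u hu => by
      rw [card_union_of_disjoint (hdisj u hu), pow_add], ← mul_sum, sum_powerset_neg_one_pow_card]
    · have : t \ s = ∅ ↔ s = t := by
        rw [sdiff_eq_empty_iff_subset, subset_antisymm_iff, and_iff_right hst]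
      simp only [this, mul_ite, mul_one, mul_zero]
    · intro u hu v hv huv
      rw [← union_sdiff_cancel_left (hdisj u hu), ← union_sdiff_cancel_left (hdisj v hv)]
      exact congrArg (· \ s) huv
  · rw [Icc_eq_empty hst, sum_empty, if_neg (fun h : s = t => hst h.subset)]

namespace Pi

variable {α β M : Type*} [Fintype α] [DecidableEq β] [AddCommMonoid M]

def mapDomain (φ : α → β) : (α → M) →+ (β → M) where
  toFun h := ∑ a, Pi.single (φ a) (h a)
  map_zero' := by simp
  map_add' h h' := by simp [Pi.single_add, sum_add_distrib]

theorem mapDomain_eq_sum (φ : α → β) (h : α → M) :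
    mapDomain φ h = ∑ a, Pi.single (φ a) (h a) := rfl

theorem mapDomain_apply (φ : α → β) (h : α → M) (b : β) :
    mapDomain φ h b = ∑ a with φ a = b, h a := by
  simp [mapDomain, Pi.single_apply, sum_filter, eq_comm]

theorem mapDomain_single [DecidableEq α] (φ : α → β) (a : α) (m : M) :
    mapDomain φ (Pi.single a m) = Pi.single (φ a) m := by
  simp [mapDomain, Pi.single_apply, apply_ite]

theorem mapDomain_id [DecidableEq α] (h : α → M) : mapDomain id h = h :=
  univ_sum_single h

theorem mapDomain_comp {γ : Type*} [Fintype β] [DecidableEq γ] (φ : α → β) (ψ : β → γ)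
    (h : α → M) : mapDomain (ψ ∘ φ) h = mapDomain ψ (mapDomain φ h) := by
  classical
  rw [mapDomain_eq_sum φ, map_sum]
  simp only [mapDomain_single]
  rfl

theorem mapDomain_congr {φ ψ : α → β} {h : α → M} (hφψ : ∀ a, h a ≠ 0 → φ a = ψ a) :
    mapDomain φ h = mapDomain ψ h := by
  refine sum_congr rfl fun a _ => ?_
  by_cases ha : h a = 0
  · simp [ha]
  · rw [hφψ a ha]

end Pi

theorem neg_pow_sub_mul_neg_pow_sub {R : Type*} [CommRing R] (a b : R) {m n k : ℕ}
    (hm : k ≤ m) (hn : k ≤ n) :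
    (-a) ^ (m - k) * (-b) ^ (n - k) = (-1) ^ (m + n) * (a ^ (m - k) * b ^ (n - k)) := by
  rw [neg_pow, neg_pow, show m + n = (m - k) + (n - k) + 2 * k by omega, pow_add, pow_add,
    pow_mul, neg_one_sq, one_pow]
  ring

open Classical in
theorem sum_neg_one_pow_card_support_subset_subset_zeros {ι M N : Type*} [Fintype ι]
    [DecidableEq ι] [Zero M] [Zero N] (f : ι → M) (g : ι → N) :
    ∑ X : Finset ι, (if (∀ i ∈ X, f i = 0) ∧ ∀ i ∉ X, g i = 0 then (-1 : ℤ) ^ #X else 0) =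
      if ∀ i, g i ≠ 0 ↔ f i = 0 then (-1) ^ #{i | g i ≠ 0} else 0 := by
  have hIcc : ({X | (∀ i ∈ X, f i = 0) ∧ ∀ i ∉ X, g i = 0} : Finset (Finset ι)) =
      Icc ({i | g i ≠ 0} : Finset ι) ({i | f i = 0} : Finset ι) := by
    ext X
    simp only [mem_filter, mem_univ, true_and, mem_Icc, subset_iff]
    exact and_comm.trans (and_congr (forall_congr' fun i => not_imp_comm) Iff.rfl)
  rw [← sum_filter, hIcc, sum_Icc_neg_one_pow_card]
  simp only [Finset.ext_iff, mem_filter, mem_univ, true_and]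

namespace TensionFlow

variable {V E : Type} (tl hd : E → V)

def edgeRel (X : Finset E) (a b : V) : Prop :=
  ∃ e ∈ X, (tl e = a ∧ hd e = b) ∨ (tl e = b ∧ hd e = a)

abbrev Component (X : Finset E) : Type := Quot (edgeRel tl hd X)

noncomputable def numComponents (X : Finset E) : ℕ := Nat.card (Component tl hd X)

theorem numComponents_le_card [Fintype V] (X : Finset E) :
    numComponents tl hd X ≤ Fintype.card V :=
  (Nat.card_le_card_of_surjective _ Quot.mk_surjective).trans_eq Nat.card_eq_fintype_card

theorem grank_eq [Fintype V] (X : Finset E) :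
    grank tl hd X = Fintype.card V - numComponents tl hd X := rfl

theorem numComponents_anti [Finite V] {X Y : Finset E} (h : X ⊆ Y) :
    numComponents tl hd Y ≤ numComponents tl hd X :=
  Nat.card_le_card_of_surjective (Quot.map id fun _ _ ⟨e, he, h'⟩ => ⟨e, h he, h'⟩)
    fun c => Quot.inductionOn c fun v => ⟨Quot.mk _ v, rfl⟩

section Tension

variable (A : Type) [AddCommGroup A]

def constOnEdges (X : Finset E) : AddSubgroup (V → A) where
  carrier := {p | ∀ e ∈ X, p (tl e) = p (hd e)}
  zero_mem' _ _ := rfl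
  add_mem' hp hq e he := by simp [hp e he, hq e he]
  neg_mem' hp e he := by simp [hp e he]

def constOnEdgesEquiv (X : Finset E) :
    constOnEdges tl hd A X ≃ (Component tl hd X → A) where
  toFun p := Quot.lift p.1 <| by
    rintro a b ⟨e, he, ⟨rfl, rfl⟩ | ⟨rfl, rfl⟩⟩
    exacts [p.2 e he, (p.2 e he).symm]
  invFun k := ⟨k ∘ Quot.mk _, fun e he => congrArg k (Quot.sound ⟨e, he, .inl ⟨rfl, rfl⟩⟩)⟩
  right_inv k := funext fun c => Quot.inductionOn c fun _ => rfl

theorem card_constOnEdges [Finite V] (X : Finset E) :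
    Nat.card (constOnEdges tl hd A X) = Nat.card A ^ numComponents tl hd X := by
  rw [Nat.card_congr (constOnEdgesEquiv tl hd A X), Nat.card_fun, numComponents]

def coboundary : (V → A) →+ (E → A) where
  toFun p e := p (tl e) - p (hd e)
  map_zero' := by ext; simp
  map_add' p q := by ext; simp only [Pi.add_apply]; abel

theorem ker_coboundary [Fintype E] : (coboundary tl hd A).ker = constOnEdges tl hd A univ := by
  ext p
  simp [coboundary, constOnEdges, funext_iff, sub_eq_zero]

theorem mem_map_coboundary (X : Finset E) (f : E → A) :
    f ∈ (constOnEdges tl hd A X).map (coboundary tl hd A) ↔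
      IsTension tl hd f ∧ ∀ e ∈ X, f e = 0 := by
  constructor
  · rintro ⟨p, hp, rfl⟩
    exact ⟨⟨p, fun _ => rfl⟩, fun e he => sub_eq_zero.mpr (hp e he)⟩
  · rintro ⟨⟨p, hf⟩, hX⟩
    refine ⟨p, fun e he => ?_, funext fun e => (hf e).symm⟩
    rw [← sub_eq_zero, ← hf e]
    exact hX e he

theorem card_tensions_mul [Fintype E] [Finite V] (X : Finset E) :
    Nat.card {f : E → A // IsTension tl hd f ∧ ∀ e ∈ X, f e = 0} *
        Nat.card A ^ numComponents tl hd univ = Nat.card A ^ numComponents tl hd X := by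
  have key := (constOnEdges tl hd A X).card_inf_ker_mul_card_map (coboundary tl hd A)
  rw [ker_coboundary, inf_eq_right.mpr fun p hp e _ => hp e (mem_univ e),
    card_constOnEdges, card_constOnEdges] at key
  rw [← key, mul_comm]
  congr 1
  exact Nat.card_congr (Equiv.subtypeEquivRight fun f => (mem_map_coboundary tl hd A X f).symm)

end Tension

section Components

variable (B : Type) [AddCommGroup B] [Fintype V]

open Classical in
noncomputable def componentSum (X : Finset E) : (V → B) →+ (Component tl hd X → B) :=
  Pi.mapDomain (Quot.mk _)

theorem componentSum_surjective (X : Finset E) :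
    Function.Surjective (componentSum tl hd B X) := by
  classical
  have := Fintype.ofFinite (Component tl hd X)
  intro k
  refine ⟨Pi.mapDomain Quot.out k, ?_⟩
  rw [componentSum, ← Pi.mapDomain_comp, show Quot.mk _ ∘ Quot.out = id from funext Quot.out_eq]
  exact Pi.mapDomain_id k

theorem card_ker_componentSum_mul (X : Finset E) :
    Nat.card (componentSum tl hd B X).ker * Nat.card B ^ numComponents tl hd X =
      Nat.card B ^ Fintype.card V := by
  have key := (⊤ : AddSubgroup (V → B)).card_inf_ker_mul_card_map (componentSum tl hd B X)
  rwa [top_inf_eq, ← AddMonoidHom.range_eq_map,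
    AddMonoidHom.range_eq_top_of_surjective _ (componentSum_surjective tl hd B X),
    AddSubgroup.card_top, AddSubgroup.card_top, Nat.card_fun, Nat.card_fun,
    Nat.card_eq_fintype_card (α := V)] at key

end Components

section Flow

variable (B : Type) [AddCommGroup B]

def supportedOn (X : Finset E) : AddSubgroup (E → B) where
  carrier := {g | ∀ e ∉ X, g e = 0}
  zero_mem' _ _ := rfl
  add_mem' hg hg' e he := by simp [hg e he, hg' e he]
  neg_mem' hg e he := by simp [hg e he]

open Classical in
noncomputable def supportedOnEquiv (X : Finset E) : supportedOn B X ≃ (X → B) where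
  toFun g e := g.1 e
  invFun k := ⟨fun e => if h : e ∈ X then k ⟨e, h⟩ else 0, fun e he => dif_neg he⟩
  left_inv g := Subtype.ext <| funext fun e => by
    by_cases he : e ∈ X
    · exact dif_pos he
    · exact (dif_neg he).trans (g.2 e he).symm
  right_inv k := funext fun e => dif_pos e.2

theorem card_supportedOn (X : Finset E) : Nat.card (supportedOn B X) = Nat.card B ^ #X := by
  rw [Nat.card_congr (supportedOnEquiv B X), Nat.card_fun, Nat.card_eq_finsetCard]

theorem single_mem_supportedOn [DecidableEq E] {X : Finset E} {e : E} (he : e ∈ X) (b : B) :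
    Pi.single e b ∈ supportedOn B X :=
  fun _ he' => by rw [Pi.single_eq_of_ne (ne_of_mem_of_not_mem he he').symm]

variable [Fintype E] [DecidableEq V]

def boundary : (E → B) →+ (V → B) := Pi.mapDomain tl - Pi.mapDomain hd

theorem isFlow_iff_boundary_eq_zero (g : E → B) :
    IsFlow tl hd g ↔ boundary tl hd B g = 0 := by
  simp [IsFlow, boundary, funext_iff, Pi.mapDomain_apply, sub_eq_zero]

theorem boundary_single [DecidableEq E] (e : E) (b : B) :
    boundary tl hd B (Pi.single e b) = Pi.single (tl e) b - Pi.single (hd e) b := by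
  simp [boundary, Pi.mapDomain_single]

theorem single_sub_single_mem_map_boundary {X : Finset E} {a a' : V}
    (h : Relation.EqvGen (edgeRel tl hd X) a a') (b : B) :
    Pi.single a b - Pi.single a' b ∈ (supportedOn B X).map (boundary tl hd B) := by
  classical
  induction h with
  | rel a a' haa' =>
    obtain ⟨e, he, ⟨rfl, rfl⟩ | ⟨rfl, rfl⟩⟩ := haa'
    · exact ⟨_, single_mem_supportedOn B he b, boundary_single tl hd B e b⟩
    · rw [← neg_sub]
      exact neg_mem ⟨_, single_mem_supportedOn B he b, boundary_single tl hd B e b⟩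
  | refl a => rw [sub_self]; exact zero_mem _
  | symm a a' _ ih => rw [← neg_sub]; exact neg_mem ih
  | trans a a' a'' _ _ ih ih' => rw [← sub_add_sub_cancel]; exact add_mem ih ih'

variable [Fintype V]

theorem map_boundary_supportedOn (X : Finset E) :
    (supportedOn B X).map (boundary tl hd B) = (componentSum tl hd B X).ker := by
  classical
  ext h
  constructor
  · rintro ⟨g, hg, rfl⟩
    rw [AddMonoidHom.mem_ker, componentSum, boundary, AddMonoidHom.sub_apply, map_sub,
      ← Pi.mapDomain_comp, ← Pi.mapDomain_comp, sub_eq_zero]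
    exact Pi.mapDomain_congr fun e he =>
      Quot.sound ⟨e, by_contra (he ∘ hg e), .inl ⟨rfl, rfl⟩⟩
  · intro hh
    have := Fintype.ofFinite (Component tl hd X)
    have hrep : Pi.mapDomain (Quot.out ∘ Quot.mk (edgeRel tl hd X)) h = 0 := by
      rw [Pi.mapDomain_comp, ← componentSum, hh, map_zero]
    rw [← Pi.mapDomain_id h, ← sub_zero (Pi.mapDomain id h), ← hrep, Pi.mapDomain_eq_sum,
      Pi.mapDomain_eq_sum, ← sum_sub_distrib]
    exact sum_mem fun v _ => single_sub_single_mem_map_boundary tl hd B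
      (Quot.eqvGen_exact (Quot.out_eq _).symm) (h v)

theorem card_flows_mul (X : Finset E) :
    Nat.card {g : E → B // IsFlow tl hd g ∧ ∀ e ∉ X, g e = 0} * Nat.card B ^ Fintype.card V =
      Nat.card B ^ (#X + numComponents tl hd X) := by
  have key := (supportedOn B X).card_inf_ker_mul_card_map (boundary tl hd B)
  rw [map_boundary_supportedOn, card_supportedOn] at key
  have hflows : Nat.card {g : E → B // IsFlow tl hd g ∧ ∀ e ∉ X, g e = 0} =
      Nat.card ↥(supportedOn B X ⊓ (boundary tl hd B).ker) :=
    Nat.card_congr <| Equiv.subtypeEquivRight fun g => by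
      rw [AddSubgroup.mem_inf, AddMonoidHom.mem_ker, isFlow_iff_boundary_eq_zero, and_comm]
      rfl
  rw [hflows, ← card_ker_componentSum_mul tl hd B X, ← mul_assoc, key, pow_add]

/-- Proved by counting `ZMod 2`-valued flows supported on `X`, of which there is at least one. -/
theorem card_le_card_add_numComponents (X : Finset E) :
    Fintype.card V ≤ #X + numComponents tl hd X := by
  have key := card_flows_mul tl hd (ZMod 2) X
  have : Nonempty {g : E → ZMod 2 // IsFlow tl hd g ∧ ∀ e ∉ X, g e = 0} :=
    ⟨0, (isFlow_iff_boundary_eq_zero tl hd _ 0).mpr (map_zero _), fun _ _ => rfl⟩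
  have hpos := Nat.card_pos (α := {g : E → ZMod 2 // IsFlow tl hd g ∧ ∀ e ∉ X, g e = 0})
  rw [Nat.card_zmod] at key
  exact (Nat.pow_le_pow_iff_right (by norm_num)).mp (key ▸ Nat.le_mul_of_pos_left _ hpos)

end Flow

section Rank

variable [Fintype V] [Fintype E] [DecidableEq E]

open Classical in
theorem card_tensions_vanishingOn (A : Type) [AddCommGroup A] [Fintype A] (X : Finset E) :
    #{f : E → A | IsTension tl hd f ∧ ∀ e ∈ X, f e = 0} =
      Fintype.card A ^ (grank tl hd univ - grank tl hd X) := by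
  have hmono := numComponents_anti tl hd (subset_univ X)
  have hle := numComponents_le_card tl hd X
  rw [grank_eq, grank_eq, show Fintype.card V - numComponents tl hd univ -
    (Fintype.card V - numComponents tl hd X) =
      numComponents tl hd X - numComponents tl hd univ by omega]
  refine Nat.eq_of_mul_eq_mul_right
    (pow_pos (Fintype.card_pos (α := A)) (numComponents tl hd univ)) ?_
  rw [← pow_add, Nat.sub_add_cancel hmono, ← Fintype.card_subtype, ← Nat.card_eq_fintype_card,
    ← Nat.card_eq_fintype_card]
  exact card_tensions_mul tl hd A X

variable [DecidableEq V]

open Classical in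
theorem card_flows_supportedOn (B : Type) [AddCommGroup B] [Fintype B] (X : Finset E) :
    #{g : E → B | IsFlow tl hd g ∧ ∀ e ∉ X, g e = 0} =
      Fintype.card B ^ (#X - grank tl hd X) := by
  have hle := numComponents_le_card tl hd X
  have hge := card_le_card_add_numComponents tl hd X
  rw [grank_eq, show #X - (Fintype.card V - numComponents tl hd X) =
    #X + numComponents tl hd X - Fintype.card V by omega]
  refine Nat.eq_of_mul_eq_mul_right (pow_pos (Fintype.card_pos (α := B)) (Fintype.card V)) ?_
  rw [← pow_add, Nat.sub_add_cancel hge, ← Fintype.card_subtype, ← Nat.card_eq_fintype_card,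
    ← Nat.card_eq_fintype_card]
  exact card_flows_mul tl hd B X

open Classical in
theorem whitney_term_eq_sum (A B : Type) [AddCommGroup A] [Fintype A] [AddCommGroup B]
    [Fintype B] (X : Finset E) :
    (-(Fintype.card A : ℤ)) ^ (grank tl hd univ - grank tl hd X) *
        (-(Fintype.card B : ℤ)) ^ (#X - grank tl hd X) =
      (-1) ^ grank tl hd univ * ∑ fg : (E → A) × (E → B),
        if (IsTension tl hd fg.1 ∧ IsFlow tl hd fg.2) ∧
            ((∀ e ∈ X, fg.1 e = 0) ∧ ∀ e ∉ X, fg.2 e = 0) then (-1) ^ #X else 0 := by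
  have hanti := numComponents_anti tl hd (subset_univ X)
  have hle := card_le_card_add_numComponents tl hd X
  have hpairs : ({fg | (IsTension tl hd fg.1 ∧ IsFlow tl hd fg.2) ∧
      ((∀ e ∈ X, fg.1 e = 0) ∧ ∀ e ∉ X, fg.2 e = 0)} : Finset ((E → A) × (E → B))) =
      ({f | IsTension tl hd f ∧ ∀ e ∈ X, f e = 0} : Finset (E → A)) ×ˢ
        ({g | IsFlow tl hd g ∧ ∀ e ∉ X, g e = 0} : Finset (E → B)) := by
    ext fg
    simp only [mem_filter, mem_univ, true_and, mem_product]
    tauto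
  rw [neg_pow_sub_mul_neg_pow_sub _ _ (by rw [grank_eq, grank_eq]; omega)
      (by rw [grank_eq]; omega), ← sum_filter, hpairs, sum_const, card_product,
    card_tensions_vanishingOn, card_flows_supportedOn, pow_add, nsmul_eq_mul]
  push_cast
  ring

end Rank

end TensionFlow

open TensionFlow

open Classical in
/-- `R(G;-p,-q) = (-1)^{r(G)} ∑ (-1)^{|supp g|}`, summed over all complementary
tension-flows `(f,g)` (those with `supp g = ker f`) with values in finite
abelian groups `A, B` of orders `p, q`. -/
theorem stmt10 {V E A B : Type} [Fintype V] [Fintype E] [DecidableEq V] [DecidableEq E]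
    [AddCommGroup A] [Fintype A] [AddCommGroup B] [Fintype B]
    (tl hd : E → V) (p q : ℕ) (hp : Fintype.card A = p) (hq : Fintype.card B = q) :
    ∑ X : Finset E, (-(p : ℤ)) ^ (grank tl hd Finset.univ - grank tl hd X) *
        (-(q : ℤ)) ^ (X.card - grank tl hd X)
    = (-1 : ℤ) ^ (grank tl hd (Finset.univ : Finset E)) *
      ∑ fg ∈ Finset.univ.filter (fun fg : (E → A) × (E → B) =>
          IsTension tl hd fg.1 ∧ IsFlow tl hd fg.2 ∧
          ∀ e : E, fg.2 e ≠ 0 ↔ fg.1 e = 0),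
        (-1 : ℤ) ^ (Finset.univ.filter (fun e => fg.2 e ≠ 0)).card := by
  subst hp hq
  calc _ = ∑ X : Finset E, (-1) ^ grank tl hd univ * ∑ fg : (E → A) × (E → B),
        if (IsTension tl hd fg.1 ∧ IsFlow tl hd fg.2) ∧
            ((∀ e ∈ X, fg.1 e = 0) ∧ ∀ e ∉ X, fg.2 e = 0) then (-1) ^ #X else 0 :=
        sum_congr rfl fun X _ => whitney_term_eq_sum tl hd A B X
    _ = (-1) ^ grank tl hd univ * ∑ fg : (E → A) × (E → B),
        if IsTension tl hd fg.1 ∧ IsFlow tl hd fg.2 then ∑ X : Finset E,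
          (if (∀ e ∈ X, fg.1 e = 0) ∧ ∀ e ∉ X, fg.2 e = 0 then (-1) ^ #X else 0) else 0 := by
        rw [← mul_sum, sum_comm]
        congr 1
        refine sum_congr rfl fun fg _ => ?_
        split_ifs with h <;> simp [h]
    _ = _ := by
        rw [sum_filter]
        congr 1
        refine sum_congr rfl fun fg _ => ?_
        rw [sum_neg_one_pow_card_support_subset_subset_zeros]
        split_ifs <;> tauto
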